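/- Let E be a finite-dimensional real inner product space and f : E → ℝ differentiable with ∇f L-Lipschitz. Let (Ω, 𝓕, P) be a probability space with a sub-σ-algebra 𝓖, let θ : Ω → E be 𝓖-measurable and square-integrable with ∇f(θ) square-integrable, let g : Ω → E be square-integrable with E[g | 𝓖] = ∇f(θ) almost surely, let η ≥ 0, and set θ' = θ − η·g. Then E[f(θ')] ≤ E[f(θ)] − η·E[‖∇f(θ)‖²] + (L·η²/2)·E[‖g‖²]. -/

import Mathlib

open MeasureTheory InnerProductSpace
open scoped RealInnerProductSpace

/-!
Applying the descent lemma at `θ ω` with step `-η • g ω` and integrating reduces the claim to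
`E⟪∇f(θ), g⟫ = E‖∇f(θ)‖²`. Since `∇f(θ)` is `𝓖`-measurable it can be pulled out of
`E[⟪∇f(θ), g⟫ | 𝓖]`, which leaves `⟪∇f(θ), E[g | 𝓖]⟫ = ‖∇f(θ)‖²`.
-/

section Descent

variable {F : Type*} [NormedAddCommGroup F] [NormedSpace ℝ F]
  {f : F → ℝ} {f' : F → F →L[ℝ] ℝ} {L : ℝ}

theorem abs_sub_sub_le_of_lipschitz_fderiv (hf : ∀ x, HasFDerivAt f (f' x) x)
    (hlip : ∀ x y, ‖f' x - f' y‖ ≤ L * ‖x - y‖) (x v : F) :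
    |f (x + v) - f x - f' x v| ≤ L / 2 * ‖v‖ ^ 2 := by
  have hψ : ∀ t : ℝ, HasDerivAt (fun t : ℝ => f (x + t • v) - f x - t * f' x v)
      (f' (x + t • v) v - f' x v) t := by
    intro t
    have hline : HasDerivAt (fun t : ℝ => x + t • v) v t := by
      simpa using ((hasDerivAt_id t).smul_const v).const_add x
    exact (((hf _).comp_hasDerivAt t hline).sub_const (f x)).sub (hasDerivAt_mul_const _)
  have hB : ∀ t : ℝ, HasDerivAt (fun t : ℝ => L / 2 * t ^ 2 * ‖v‖ ^ 2) (L * t * ‖v‖ ^ 2) t :=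
    fun t => (((hasDerivAt_pow 2 t).const_mul (L / 2)).mul_const (‖v‖ ^ 2)).congr_deriv
      (by ring)
  have hbound : ∀ t ∈ Set.Ico (0 : ℝ) 1, ‖f' (x + t • v) v - f' x v‖ ≤ L * t * ‖v‖ ^ 2 := by
    rintro t ⟨ht, -⟩
    calc ‖f' (x + t • v) v - f' x v‖ ≤ ‖f' (x + t • v) - f' x‖ * ‖v‖ :=
          (f' (x + t • v) - f' x).le_opNorm v
      _ ≤ L * ‖t • v‖ * ‖v‖ := by
          gcongr
          simpa using hlip (x + t • v) x
      _ = L * t * ‖v‖ ^ 2 := by rw [norm_smul, Real.norm_of_nonneg ht]; ring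
  simpa using image_norm_le_of_norm_deriv_right_le_deriv_boundary
    (fun t _ => (hψ t).continuousAt.continuousWithinAt) (fun t _ => (hψ t).hasDerivWithinAt)
    (by simp) hB hbound (Set.right_mem_Icc.2 zero_le_one)

variable {Ω : Type*} {mΩ : MeasurableSpace Ω} {μ : Measure Ω} [IsFiniteMeasure μ]

theorem integrable_comp_of_lipschitz_fderiv (hf : ∀ x, HasFDerivAt f (f' x) x)
    (hlip : ∀ x y, ‖f' x - f' y‖ ≤ L * ‖x - y‖) {Z : Ω → F} (hZ : MemLp Z 2 μ) :
    Integrable (fun ω => f (Z ω)) μ := by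
  have hcont : Continuous f := continuous_iff_continuousAt.2 fun x => (hf x).continuousAt
  refine Integrable.mono' (((integrable_const |f 0|).add
      ((hZ.integrable one_le_two).norm.const_mul ‖f' 0‖)).add
      (hZ.norm.integrable_sq.const_mul (L / 2)))
    (hcont.comp_aestronglyMeasurable hZ.1) (ae_of_all _ fun ω => ?_)
  have hquad := abs_le.1 (by simpa using abs_sub_sub_le_of_lipschitz_fderiv hf hlip 0 (Z ω))
  have hlin := abs_le.1 (((f' 0).le_opNorm (Z ω)).trans_eq' (Real.norm_eq_abs _).symm)
  simp only [Pi.add_apply, Real.norm_eq_abs, abs_le]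
  constructor <;> linarith [abs_le.1 (le_refl |f 0|)]

theorem integral_comp_add_le_of_lipschitz_fderiv (hf : ∀ x, HasFDerivAt f (f' x) x)
    (hlip : ∀ x y, ‖f' x - f' y‖ ≤ L * ‖x - y‖) {Z V : Ω → F} (hZ : MemLp Z 2 μ)
    (hV : MemLp V 2 μ) (hZV : Integrable (fun ω => f' (Z ω) (V ω)) μ) :
    ∫ ω, f (Z ω + V ω) ∂μ ≤
      ∫ ω, f (Z ω) ∂μ + ∫ ω, f' (Z ω) (V ω) ∂μ + L / 2 * ∫ ω, ‖V ω‖ ^ 2 ∂μ := by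
  have hfZ := integrable_comp_of_lipschitz_fderiv hf hlip hZ
  have hfZV : Integrable (fun ω => f (Z ω) + f' (Z ω) (V ω)) μ := hfZ.add hZV
  have hV2 := hV.norm.integrable_sq.const_mul (L / 2)
  calc ∫ ω, f (Z ω + V ω) ∂μ
      ≤ ∫ ω, (f (Z ω) + f' (Z ω) (V ω) + L / 2 * ‖V ω‖ ^ 2) ∂μ :=
        integral_mono (integrable_comp_of_lipschitz_fderiv hf hlip (hZ.add hV))
          (hfZV.add hV2) fun ω => by
            linarith [(abs_le.1 (abs_sub_sub_le_of_lipschitz_fderiv hf hlip (Z ω) (V ω))).2]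
    _ = _ := by rw [integral_add hfZV hV2, integral_add hfZ hZV, integral_const_mul]

end Descent

section Conditional

variable {Ω E : Type*} {m mΩ : MeasurableSpace Ω} {μ : Measure Ω}
  [NormedAddCommGroup E] [InnerProductSpace ℝ E]

theorem MeasureTheory.MemLp.integrable_inner {X Y : Ω → E} (hX : MemLp X 2 μ)
    (hY : MemLp Y 2 μ) :
    Integrable (fun ω => ⟪X ω, Y ω⟫) μ :=
  (L2.integrable_inner (hX.toLp X) (hY.toLp Y)).congr <| by
    filter_upwards [hX.coeFn_toLp, hY.coeFn_toLp] with ω hXω hYω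
    rw [hXω, hYω]

theorem integral_inner_condExp [CompleteSpace E] (hm : m ≤ mΩ) [SigmaFinite (μ.trim hm)]
    {X Y : Ω → E} (hX : StronglyMeasurable[m] X) (hXY : Integrable (fun ω => ⟪X ω, Y ω⟫) μ)
    (hY : Integrable Y μ) :
    ∫ ω, ⟪X ω, Y ω⟫ ∂μ = ∫ ω, ⟪X ω, (μ[Y | m]) ω⟫ ∂μ := by
  rw [← integral_condExp hm]
  exact integral_congr_ae
    (condExp_bilin_of_stronglyMeasurable_left (innerSL ℝ : E →L[ℝ] E →L[ℝ] ℝ) hX hXY hY)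

end Conditional

theorem sgd_one_step_expected_descent_general
    {E : Type*} [NormedAddCommGroup E] [InnerProductSpace ℝ E]
    [FiniteDimensional ℝ E]
    (f : E → ℝ) (L : ℝ)
    (hf : Differentiable ℝ f)
    (hlip : ∀ x y : E, ‖gradient f x - gradient f y‖ ≤ L * ‖x - y‖)
    {Ω : Type*} {mΩ : MeasurableSpace Ω} (μ : Measure Ω) [IsProbabilityMeasure μ]
    (𝓖 : MeasurableSpace Ω) (h𝓖 : 𝓖 ≤ mΩ)
    (θ g : Ω → E)
    (hθ_meas : StronglyMeasurable[𝓖] θ)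
    (hθ_int : MemLp θ 2 μ)
    (hgrad_int : MemLp (fun ω => gradient f (θ ω)) 2 μ)
    (hg_int : MemLp g 2 μ)
    (hcond : μ[g | 𝓖] =ᵐ[μ] fun ω => gradient f (θ ω))
    (η : ℝ)
    (θ' : Ω → E) (hθ' : ∀ ω, θ' ω = θ ω - η • g ω) :
    (∫ ω, f (θ' ω) ∂μ) ≤
      (∫ ω, f (θ ω) ∂μ) - η * (∫ ω, ‖gradient f (θ ω)‖ ^ 2 ∂μ)
        + (L * η ^ 2 / 2) * (∫ ω, ‖g ω‖ ^ 2 ∂μ) := by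
  have hf' : ∀ x, HasFDerivAt f (toDual ℝ E (gradient f x)) x :=
    fun x => (hf x).hasGradientAt.hasFDerivAt
  have hlip' :
      ∀ x y, ‖toDual ℝ E (gradient f x) - toDual ℝ E (gradient f y)‖ ≤ L * ‖x - y‖ :=
    fun x y => by rw [← map_sub, LinearIsometryEquiv.norm_map]; exact hlip x y
  have hgrad_cont : Continuous (gradient f) :=
    (LipschitzWith.of_dist_le_mul (K := L.toNNReal) fun x y => by
      simpa only [dist_eq_norm] using (hlip x y).trans
        (mul_le_mul_of_nonneg_right (Real.le_coe_toNNReal L) (norm_nonneg _))).continuous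
  have hunbiased : ∫ ω, ⟪gradient f (θ ω), g ω⟫ ∂μ = ∫ ω, ‖gradient f (θ ω)‖ ^ 2 ∂μ := by
    have := isFiniteMeasure_trim (μ := μ) h𝓖
    rw [integral_inner_condExp h𝓖 (hgrad_cont.comp_stronglyMeasurable hθ_meas)
      (hgrad_int.integrable_inner hg_int) (hg_int.integrable one_le_two)]
    exact integral_congr_ae
      (hcond.mono fun ω hω => by simp only [hω, real_inner_self_eq_norm_sq])
  have hstep : MemLp (fun ω => -(η • g ω)) 2 μ := (hg_int.const_smul η).neg
  have hdescent := integral_comp_add_le_of_lipschitz_fderiv hf' hlip' hθ_int hstep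
    (hgrad_int.integrable_inner hstep)
  simp only [← sub_eq_add_neg, ← hθ', toDual_apply_apply, inner_neg_right,
    real_inner_smul_right, integral_neg, integral_const_mul, norm_neg, norm_smul, mul_pow,
    Real.norm_eq_abs, sq_abs, hunbiased] at hdescent
  linarith

/-- One-step expected descent for a stochastic gradient step
`θ' = θ − η g` with conditionally unbiased `g` (i.e. `E[g|𝓖] = ∇f(θ)` a.s.):
`E[f θ'] ≤ E[f θ] − η E[‖∇f θ‖²] + (L η²/2) E[‖g‖²]`. -/
theorem sgd_one_step_expected_descent
    {E : Type*} [NormedAddCommGroup E] [InnerProductSpace ℝ E]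
    [FiniteDimensional ℝ E]
    (f : E → ℝ) (L : ℝ)
    (hf : Differentiable ℝ f)
    (hlip : ∀ x y : E, ‖gradient f x - gradient f y‖ ≤ L * ‖x - y‖)
    {Ω : Type*} {mΩ : MeasurableSpace Ω} (μ : Measure Ω) [IsProbabilityMeasure μ]
    (𝓖 : MeasurableSpace Ω) (h𝓖 : 𝓖 ≤ mΩ)
    (θ g : Ω → E)
    (hθ_meas : StronglyMeasurable[𝓖] θ)
    (hθ_int : MemLp θ 2 μ)
    (hgrad_int : MemLp (fun ω => gradient f (θ ω)) 2 μ)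
    (hg_int : MemLp g 2 μ)
    (hcond : μ[g | 𝓖] =ᵐ[μ] fun ω => gradient f (θ ω))
    (η : ℝ) (hη : 0 ≤ η)
    (θ' : Ω → E) (hθ' : ∀ ω, θ' ω = θ ω - η • g ω) :
    (∫ ω, f (θ' ω) ∂μ) ≤
      (∫ ω, f (θ ω) ∂μ) - η * (∫ ω, ‖gradient f (θ ω)‖ ^ 2 ∂μ)
        + (L * η ^ 2 / 2) * (∫ ω, ‖g ω‖ ^ 2 ∂μ) :=
  sgd_one_step_expected_descent_general f L hf hlip μ 𝓖 h𝓖 θ g hθ_meas hθ_int hgrad_int hg_int hcond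
    η θ' hθ'
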